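/- Let α > 1 and define b: ℝ → ℝ by b(x) = x · log(1/x) · (log log(1/x) − 1)^α for 0 < x < e^{−e} and b(x) = 0 otherwise. Then b is continuous, and the Cauchy problem γ'(t) = b(γ(t)), γ(0) = 0 has at least two distinct solutions on [0,∞): the constant solution γ₁ ≡ 0, and the function γ₂ defined by γ₂(0) = 0 and γ₂(t) = exp( −exp( 1 + ((α−1)t)^{−1/(α−1)} ) ) for t > 0, which is differentiable on [0,∞), takes values in [0, e^{−e}), is strictly positive for t > 0, and satisfies γ₂'(t) = b(γ₂(t)) for all t ≥ 0. -/

import Mathlib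

/-!
With `u(t) = ((α - 1) t) ^ (-1 / (α - 1))`, which solves `u' = -u ^ α` and blows up as `t → 0⁺`,
the curve `γ₂ = exp (-exp (1 + u))` solves `γ' = b(γ)` for `t > 0` and tends to `0` as `t → 0⁺`.
Since `b` is continuous, `γ₂'(t) = b(γ₂ t) → b 0 = 0`, which gives the one-sided derivative at `0`.
Continuity of `b` at `0` comes from `b x ≤ x log (1/x) ^ (1 + α) → 0`, and at `exp (-exp 1)` from
the factor `(log log (1/x) - 1) ^ α` vanishing there.
-/
open Real Set Filter Topology

lemma hasDerivWithinAt_Ici_of_hasDerivAt_comp {E : Type*} [NormedAddCommGroup E]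
    [NormedSpace ℝ E] {f : ℝ → E} {g : E → E} {a : ℝ} (hg : ContinuousAt g (f a))
    (hf : ContinuousWithinAt f (Ioi a) a) (hderiv : ∀ x > a, HasDerivAt f (g (f x)) x) :
    HasDerivWithinAt f (g (f a)) (Ici a) a :=
  hasDerivWithinAt_Ici_of_tendsto_deriv
    (fun x hx => (hderiv x hx).differentiableAt.differentiableWithinAt) hf self_mem_nhdsWithin
    ((hg.tendsto.comp hf).congr' <|
      eventually_nhdsWithin_of_forall fun x hx => (hderiv x hx).deriv.symm)

noncomputable def loglogRate (α x : ℝ) : ℝ := x * log (1 / x) * (log (log (1 / x)) - 1) ^ α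

noncomputable def loglogField (α x : ℝ) : ℝ :=
  if x ∈ Ioo 0 (exp (-exp 1)) then loglogRate α x else 0

section Rate

variable {α x : ℝ}

lemma exp_one_le_log_one_div (hx0 : 0 < x) (hx : x ≤ exp (-exp 1)) : exp 1 ≤ log (1 / x) := by
  have := log_le_log hx0 hx
  rw [log_exp] at this
  rw [one_div, log_inv]
  linarith

lemma one_le_log_log_one_div (hx0 : 0 < x) (hx : x ≤ exp (-exp 1)) : 1 ≤ log (log (1 / x)) := by
  simpa using log_le_log (exp_pos 1) (exp_one_le_log_one_div hx0 hx)

lemma loglogRate_nonneg (hx0 : 0 < x) (hx : x ≤ exp (-exp 1)) : 0 ≤ loglogRate α x := by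
  have hL := (exp_pos 1).trans_le (exp_one_le_log_one_div hx0 hx)
  have hlogL := one_le_log_log_one_div hx0 hx
  exact mul_nonneg (mul_nonneg hx0.le hL.le) (rpow_nonneg (by linarith) _)

lemma loglogRate_le (hα : 0 ≤ α) (hx0 : 0 < x) (hx : x ≤ exp (-exp 1)) :
    loglogRate α x ≤ x * log (1 / x) ^ (1 + α) := by
  have hL := exp_one_le_log_one_div hx0 hx
  have hL0 : 0 < log (1 / x) := (exp_pos 1).trans_le hL
  rw [rpow_one_add' hL0.le (by linarith), ← mul_assoc]
  have := log_le_sub_one_of_pos hL0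
  have := one_le_log_log_one_div hx0 hx
  exact mul_le_mul_of_nonneg_left (rpow_le_rpow (by linarith) (by linarith) hα) (by positivity)

lemma tendsto_mul_log_one_div_rpow_nhdsGT_zero (s : ℝ) :
    Tendsto (fun x => x * log (1 / x) ^ s) (𝓝[>] 0) (𝓝 0) := by
  have hL : Tendsto (fun x => log (1 / x)) (𝓝[>] 0) atTop := by
    refine (tendsto_neg_atBot_atTop.comp tendsto_log_nhdsGT_zero).congr fun x => ?_
    simp [log_inv]
  refine ((tendsto_rpow_mul_exp_neg_mul_atTop_nhds_zero s 1 one_pos).comp hL).congr' ?_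
  filter_upwards [self_mem_nhdsWithin] with x (hx : 0 < x)
  simp [log_inv, exp_log hx, mul_comm]

lemma tendsto_loglogRate_nhdsGT_zero (hα : 0 ≤ α) :
    Tendsto (loglogRate α) (𝓝[>] 0) (𝓝 0) := by
  refine tendsto_of_tendsto_of_tendsto_of_le_of_le' tendsto_const_nhds
    (tendsto_mul_log_one_div_rpow_nhdsGT_zero (1 + α)) ?_ ?_ <;>
  filter_upwards [Ioo_mem_nhdsGT (exp_pos (-exp 1))] with x hx
  · exact loglogRate_nonneg hx.1 hx.2.le
  · exact loglogRate_le hα hx.1 hx.2.le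

lemma continuousAt_loglogRate (hα : 0 ≤ α) (hx0 : 0 < x) (hx1 : x ≠ 1) :
    ContinuousAt (loglogRate α) x := by
  have hlog : log (1 / x) ≠ 0 := by
    rw [one_div, log_inv, neg_ne_zero]; exact log_ne_zero_of_pos_of_ne_one hx0 hx1
  have hL : ContinuousAt (fun y => log (1 / y)) x :=
    (continuousAt_const.div continuousAt_id hx0.ne').log (one_div_pos.2 hx0).ne'
  exact (continuousAt_id.mul hL).mul
    (((hL.log hlog).sub continuousAt_const).rpow_const (Or.inr hα))

end Rate

lemma loglogRate_exp_neg_exp_one {α : ℝ} (hα : α ≠ 0) : loglogRate α (exp (-exp 1)) = 0 := by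
  simp [loglogRate, exp_neg, log_exp, zero_rpow hα]

lemma continuous_loglogField {α : ℝ} (hα : 0 < α) : Continuous (loglogField α) := by
  have hc : exp (-exp 1) < 1 := exp_lt_one_iff.2 (neg_neg_iff_pos.2 (exp_pos 1))
  refine continuous_if ?_ ?_ continuousOn_const
  · rw [ofPred_mem_eq, frontier_Ioo (exp_pos _)]
    rintro x (rfl | rfl)
    · simp [loglogRate]
    · exact loglogRate_exp_neg_exp_one hα.ne'
  · rw [ofPred_mem_eq, closure_Ioo (exp_pos _).ne]
    rintro x ⟨hx0, hx⟩
    rcases hx0.eq_or_lt with rfl | hx0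
    · refine (continuousWithinAt_Ioi_iff_Ici.1 ?_).mono Icc_subset_Ici_self
      simpa [ContinuousWithinAt, loglogRate] using tendsto_loglogRate_nhdsGT_zero hα.le
    · exact (continuousAt_loglogRate hα.le hx0 (hx.trans_lt hc).ne).continuousWithinAt

section Solution

variable {α u : ℝ}

lemma exp_neg_exp_one_add_mem_Ioo (hu : 0 < u) : exp (-exp (1 + u)) ∈ Ioo 0 (exp (-exp 1)) :=
  ⟨exp_pos _, exp_lt_exp.2 (neg_lt_neg (exp_lt_exp.2 (by linarith)))⟩

lemma loglogField_exp_neg_exp_one_add (hu : 0 < u) :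
    loglogField α (exp (-exp (1 + u))) = exp (-exp (1 + u)) * exp (1 + u) * u ^ α := by
  rw [loglogField, if_pos (exp_neg_exp_one_add_mem_Ioo hu), loglogRate, one_div, ← exp_neg,
    neg_neg, log_exp, log_exp, add_sub_cancel_left]

lemma hasDerivAt_exp_neg_exp_one_add {f : ℝ → ℝ} {t : ℝ} (hf : HasDerivAt f (-f t ^ α) t)
    (hft : 0 < f t) :
    HasDerivAt (fun s => exp (-exp (1 + f s))) (loglogField α (exp (-exp (1 + f t)))) t := by
  rw [loglogField_exp_neg_exp_one_add hft]
  convert ((hf.const_add 1).exp.neg).exp using 1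
  · rfl
  simp only [Pi.neg_apply]
  ring

lemma hasDerivAt_mul_rpow_neg_inv (hα : α ≠ 1) {t : ℝ} (ht : 0 < (α - 1) * t) :
    HasDerivAt (fun s => ((α - 1) * s) ^ (-(1 / (α - 1))))
      (-(((α - 1) * t) ^ (-(1 / (α - 1)))) ^ α) t := by
  have hα' : α - 1 ≠ 0 := sub_ne_zero.2 hα
  convert ((hasDerivAt_id t).const_mul (α - 1)).rpow_const (p := -(1 / (α - 1))) (Or.inl ht.ne')
    using 1
  · simp
  rw [id, ← rpow_mul ht.le]
  field_simp
  ring_nf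

lemma tendsto_exp_neg_exp_one_add_nhdsGT_zero (hα : 1 < α) :
    Tendsto (fun t => exp (-exp (1 + ((α - 1) * t) ^ (-(1 / (α - 1)))))) (𝓝[>] 0) (𝓝 0) := by
  have hα' : 0 < α - 1 := sub_pos.2 hα
  have hscale : Tendsto (fun t => (α - 1) * t) (𝓝[>] 0) (𝓝[>] 0) :=
    tendsto_iff_comap.2 (comap_mulLeft_nhdsGT_zero hα').ge
  refine tendsto_exp_neg_atTop_nhds_zero.comp (tendsto_exp_atTop.comp
    (tendsto_atTop_add_const_left _ 1 ((tendsto_rpow_neg_nhdsGT_zero ?_).comp hscale)))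
  simpa using hα'

end Solution

theorem stmt_18 (α : ℝ) (hα : 1 < α) (b γ₂ : ℝ → ℝ)
    (hb : ∀ x : ℝ, b x = if x ∈ Set.Ioo (0:ℝ) (Real.exp (-Real.exp 1)) then
      x * Real.log (1 / x) * (Real.log (Real.log (1 / x)) - 1) ^ α else 0)
    (hγ₂0 : γ₂ 0 = 0)
    (hγ₂ : ∀ t : ℝ, 0 < t →
      γ₂ t = Real.exp (-Real.exp (1 + ((α - 1) * t) ^ (-(1 / (α - 1)))))) :
    Continuous b ∧
    b 0 = 0 ∧
    (∀ t ∈ Set.Ici (0:ℝ),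
      HasDerivWithinAt (fun _ : ℝ => (0:ℝ)) (b 0) (Set.Ici 0) t) ∧
    (∀ t ∈ Set.Ici (0:ℝ), γ₂ t ∈ Set.Ico (0:ℝ) (Real.exp (-Real.exp 1))) ∧
    (∀ t : ℝ, 0 < t → 0 < γ₂ t) ∧
    (∀ t ∈ Set.Ici (0:ℝ), HasDerivWithinAt γ₂ (b (γ₂ t)) (Set.Ici 0) t) := by
  obtain rfl : b = loglogField α := funext hb
  have hb0 : loglogField α 0 = 0 := if_neg fun h => h.1.false
  have hscaled : ∀ t, 0 < t → 0 < (α - 1) * t := fun t ht => mul_pos (sub_pos.2 hα) ht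
  have hu : ∀ t, 0 < t → 0 < ((α - 1) * t) ^ (-(1 / (α - 1))) := fun t ht =>
    rpow_pos_of_pos (hscaled t ht) _
  have hγ₂_mem : ∀ t, 0 < t → γ₂ t ∈ Ioo 0 (exp (-exp 1)) := fun t ht =>
    hγ₂ t ht ▸ exp_neg_exp_one_add_mem_Ioo (hu t ht)
  have hγ₂_eq : γ₂ =ᶠ[𝓝[>] 0] fun t => exp (-exp (1 + ((α - 1) * t) ^ (-(1 / (α - 1))))) :=
    eventually_nhdsWithin_of_forall hγ₂
  have hderiv : ∀ t > 0, HasDerivAt γ₂ (loglogField α (γ₂ t)) t := fun t ht => by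
    rw [hγ₂ t ht]
    exact (hasDerivAt_exp_neg_exp_one_add (hasDerivAt_mul_rpow_neg_inv hα.ne' (hscaled t ht))
      (hu t ht)).congr_of_eventuallyEq (eventually_of_mem (Ioi_mem_nhds ht) hγ₂)
  have hcont : Continuous (loglogField α) := continuous_loglogField (by linarith)
  refine ⟨hcont, hb0, fun t _ => ?_, fun t ht => ?_,
    fun t ht => (hγ₂_mem t ht).1, fun t ht => ?_⟩
  · rw [hb0]
    exact hasDerivWithinAt_const _ _ _
  · rcases (mem_Ici.1 ht).eq_or_lt with rfl | ht
    · rw [hγ₂0]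
      exact ⟨le_rfl, exp_pos _⟩
    · exact Ioo_subset_Ico_self (hγ₂_mem t ht)
  · rcases (mem_Ici.1 ht).eq_or_lt with rfl | ht
    · refine hasDerivWithinAt_Ici_of_hasDerivAt_comp hcont.continuousAt ?_ hderiv
      rw [ContinuousWithinAt, hγ₂0]
      exact (tendsto_exp_neg_exp_one_add_nhdsGT_zero hα).congr' hγ₂_eq.symm
    · exact (hderiv t ht).hasDerivWithinAt
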